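/- Let G be a connected graph in G^cs with a cut vertex v. Then for each component D of G−v, the induced subgraph G[D ∪ {v}] also belongs to G^cs. -/

import Mathlib

/-!
Write `A = D ∪ {v}`, let `w'` be positive weights on `G[A]` and `S₀` a minimum safe set of
`G[A]`. Extend `w'` to `G` so that the vertices outside `A` weigh at most `ρ` in total, and lower
the weight of `v` by `ρ` when `v ∉ S₀`. Then `S₀ ∪ (V \ A)` (if `v ∈ S₀`) or `S₀` (if `v ∉ S₀`) is
a safe set of `G` of weight at most `w'(S₀) + ρ`, so `G ∈ G^cs` yields a connected safe set `T` of
`G` of at most that weight. Every path leaving `A` passes through `v`, hence `T ∩ A` is a connected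
safe set of `G[A]` up to an error of `2ρ` in each weight comparison. Taking `2ρ` below every
positive difference of two subset weights of `w'` removes the error, and
`cs(G[A], w') ≤ w'(T ∩ A) ≤ w'(S₀) = s(G[A], w')`.
-/


open SimpleGraph
open scoped Classical

variable {V : Type*} [Fintype V]

noncomputable def setWeight (w : V → ℝ) (A : Set V) : ℝ :=
  ∑ v : V, if v ∈ A then w v else 0

def IsComponentOf (G : SimpleGraph V) (S C : Set V) : Prop :=
  ∃ c : (G.induce S).ConnectedComponent,
    C = Subtype.val '' {x : ↥S | (G.induce S).connectedComponentMk x = c}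

def Touches (G : SimpleGraph V) (C D : Set V) : Prop :=
  ∃ a ∈ C, ∃ b ∈ D, G.Adj a b

def IsSafeSet (G : SimpleGraph V) (w : V → ℝ) (S : Set V) : Prop :=
  S.Nonempty ∧ S ≠ Set.univ ∧
    ∀ C D : Set V, IsComponentOf G S C → IsComponentOf G Sᶜ D → Touches G C D →
      setWeight w D ≤ setWeight w C

def IsConnSafeSet (G : SimpleGraph V) (w : V → ℝ) (S : Set V) : Prop :=
  IsSafeSet G w S ∧ (G.induce S).Connected

noncomputable def safeNumber (G : SimpleGraph V) (w : V → ℝ) : ℝ :=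
  sInf (setWeight w '' {S | IsSafeSet G w S})

noncomputable def connSafeNumber (G : SimpleGraph V) (w : V → ℝ) : ℝ :=
  sInf (setWeight w '' {S | IsConnSafeSet G w S})

def InGcs (G : SimpleGraph V) : Prop :=
  ∀ w : V → ℝ, (∀ v, 0 < w v) → safeNumber G w = connSafeNumber G w

namespace SimpleGraph

variable {α : Type*} {G : SimpleGraph α}

/-- Reachability inside `S`, stated for vertices of `G` rather than of `G.induce S`. -/
inductive ReachIn (G : SimpleGraph α) (S : Set α) : α → α → Prop
  | refl {x : α} (hx : x ∈ S) : G.ReachIn S x x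
  | tail {x y z : α} (h : G.ReachIn S x y) (hyz : G.Adj y z) (hz : z ∈ S) : G.ReachIn S x z

namespace ReachIn

variable {S U : Set α} {x y z : α}

lemma mem_left (h : G.ReachIn S x y) : x ∈ S := by
  induction h with
  | refl hx => exact hx
  | tail _ _ _ ih => exact ih

lemma mem_right (h : G.ReachIn S x y) : y ∈ S := by
  cases h with
  | refl hx => exact hx
  | tail _ _ hz => exact hz

lemma trans (hxy : G.ReachIn S x y) (hyz : G.ReachIn S y z) : G.ReachIn S x z := by
  induction hyz with
  | refl _ => exact hxy
  | tail _ hadj hz ih => exact .tail ih hadj hz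

lemma mono (hSU : S ⊆ U) (h : G.ReachIn S x y) : G.ReachIn U x y := by
  induction h with
  | refl hx => exact .refl (hSU hx)
  | tail _ hadj hz ih => exact .tail ih hadj (hSU hz)

lemma of_adj (hxy : G.Adj x y) (hx : x ∈ S) (hy : y ∈ S) : G.ReachIn S x y :=
  .tail (.refl hx) hxy hy

lemma of_reachable_induce {x y : S} (h : (G.induce S).Reachable x y) : G.ReachIn S x y := by
  obtain ⟨p⟩ := h
  induction p with
  | nil => exact .refl (Subtype.prop _)
  | cons hadj _ ih => exact (of_adj (G := G) hadj (Subtype.prop _) (Subtype.prop _)).trans ih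

lemma reachable_induce (h : G.ReachIn S x y) :
    (G.induce S).Reachable ⟨x, h.mem_left⟩ ⟨y, h.mem_right⟩ := by
  induction h with
  | refl _ => rfl
  | tail h hadj hz ih =>
    exact ih.trans (Adj.reachable (G := G.induce S) (u := ⟨_, h.mem_right⟩) (v := ⟨_, hz⟩) hadj)

lemma symm (h : G.ReachIn S x y) : G.ReachIn S y x :=
  of_reachable_induce h.reachable_induce.symm

lemma of_reachable (h : G.Reachable x y) : G.ReachIn Set.univ x y := by
  obtain ⟨p⟩ := h
  induction p with
  | nil => exact .refl trivial
  | cons hadj _ ih => exact (of_adj hadj (Set.mem_univ _) (Set.mem_univ _)).trans ih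

end ReachIn

lemma connected_induce_iff_reachIn {S : Set α} :
    (G.induce S).Connected ↔ S.Nonempty ∧ ∀ x ∈ S, ∀ y ∈ S, G.ReachIn S x y := by
  rw [connected_iff, Set.nonempty_coe_sort]
  exact ⟨fun ⟨hpre, hne⟩ => ⟨hne, fun x hx y hy => .of_reachable_induce (hpre ⟨x, hx⟩ ⟨y, hy⟩)⟩,
    fun ⟨hne, h⟩ => ⟨fun x y => (h x x.2 y y.2).reachable_induce, hne⟩⟩

def IsPendantAt (G : SimpleGraph α) (A : Set α) (v : α) : Prop :=
  v ∈ A ∧ ∀ x ∈ A, x ≠ v → ∀ y, G.Adj x y → y ∈ A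

variable {A U : Set α} {v a c : α}

lemma IsPendantAt.compl_union (hA : G.IsPendantAt A v) : G.IsPendantAt (Aᶜ ∪ {v}) v := by
  refine ⟨Or.inr rfl, fun x hx hxv y hxy => ?_⟩
  by_contra hy
  simp only [Set.mem_union, Set.mem_compl_iff, Set.mem_singleton_iff, not_or, not_not] at hx hy
  exact hx.resolve_right hxv (hA.2 y hy.1 hy.2 x hxy.symm)

lemma ReachIn.inter_of_isPendantAt (hA : G.IsPendantAt A v) (h : G.ReachIn U a c) (ha : a ∈ A) :
    (c ∈ A → G.ReachIn (U ∩ A) a c) ∧ (c ∉ A → G.ReachIn (U ∩ A) a v) := by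
  induction h with
  | refl hx => exact ⟨fun _ => .refl ⟨hx, ha⟩, fun hc => absurd ha hc⟩
  | @tail y z _ hadj hz ih =>
    by_cases hy : y ∈ A <;> by_cases hzA : z ∈ A
    · exact ⟨fun _ => .tail (ih.1 hy) hadj ⟨hz, hzA⟩, fun h => absurd hzA h⟩
    · have hyv : y = v := by_contra fun hyv => hzA (hA.2 y hy hyv z hadj)
      exact ⟨fun h => absurd h hzA, fun _ => hyv ▸ ih.1 hy⟩
    · have hzv : z = v := by_contra fun hzv => hy (hA.2 z hzA hzv y hadj.symm)
      exact ⟨fun _ => hzv ▸ ih.2 hy, fun h => absurd hzA h⟩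
    · exact ⟨fun h => absurd h hzA, fun _ => ih.2 hy⟩

lemma IsPendantAt.reachIn (hG : G.Connected) (hA : G.IsPendantAt A v) (ha : a ∈ A) :
    G.ReachIn A a v := by
  simpa using ((ReachIn.of_reachable (hG.preconnected a v)).inter_of_isPendantAt hA ha).1 hA.1

end SimpleGraph

section Components

variable {α : Type*} {G : SimpleGraph α} {S C C₁ C₂ : Set α} {x y : α}

lemma isComponentOf_iff : IsComponentOf G S C ↔ ∃ x ∈ C, C = {y | G.ReachIn S x y} := by
  constructor
  · rintro ⟨c, rfl⟩
    obtain ⟨x, rfl⟩ := c.exists_rep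
    refine ⟨x, ⟨x, rfl, rfl⟩, Set.ext fun y => ⟨?_, fun hy => ⟨⟨y, hy.mem_right⟩, ?_, rfl⟩⟩⟩
    · rintro ⟨y, hy, rfl⟩
      exact (ReachIn.of_reachable_induce (ConnectedComponent.eq.mp hy)).symm
    · exact ConnectedComponent.eq.mpr hy.symm.reachable_induce
  · rintro ⟨x, hx, rfl⟩
    refine ⟨(G.induce S).connectedComponentMk ⟨x, hx.mem_left⟩,
      Set.ext fun y => ⟨fun hy => ⟨⟨y, hy.mem_right⟩, ?_, rfl⟩, ?_⟩⟩
    · exact ConnectedComponent.eq.mpr hy.symm.reachable_induce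
    · rintro ⟨y, hy, rfl⟩
      exact (ReachIn.of_reachable_induce (ConnectedComponent.eq.mp hy)).symm

lemma isComponentOf_setOf_reachIn (hx : x ∈ S) : IsComponentOf G S {y | G.ReachIn S x y} :=
  isComponentOf_iff.mpr ⟨x, .refl hx, rfl⟩

namespace IsComponentOf

lemma eq_setOf_reachIn (hC : IsComponentOf G S C) (hx : x ∈ C) :
    C = {y | G.ReachIn S x y} := by
  obtain ⟨x₀, hx₀, rfl⟩ := isComponentOf_iff.mp hC
  exact Set.ext fun y => ⟨fun hy => (ReachIn.symm hx).trans hy, fun hy => ReachIn.trans hx hy⟩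

lemma nonempty (hC : IsComponentOf G S C) : C.Nonempty :=
  let ⟨x, hx, _⟩ := isComponentOf_iff.mp hC
  ⟨x, hx⟩

lemma reachIn (hC : IsComponentOf G S C) (hx : x ∈ C) (hy : y ∈ C) : G.ReachIn S x y := by
  rw [hC.eq_setOf_reachIn hx] at hy
  exact hy

lemma mem_of_reachIn (hC : IsComponentOf G S C) (hx : x ∈ C) (h : G.ReachIn S x y) : y ∈ C := by
  rw [hC.eq_setOf_reachIn hx]
  exact h

lemma subset (hC : IsComponentOf G S C) : C ⊆ S :=
  fun _ hx => (hC.reachIn hx hx).mem_left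

lemma mem_of_adj (hC : IsComponentOf G S C) (hx : x ∈ C) (hy : y ∈ S) (hxy : G.Adj x y) : y ∈ C :=
  hC.mem_of_reachIn hx (.of_adj hxy (hC.subset hx) hy)

lemma eq_of_mem (h₁ : IsComponentOf G S C₁) (h₂ : IsComponentOf G S C₂) (hx₁ : x ∈ C₁)
    (hx₂ : x ∈ C₂) : C₁ = C₂ := by
  rw [h₁.eq_setOf_reachIn hx₁, h₂.eq_setOf_reachIn hx₂]

lemma of_reachIn (hx : x ∈ C) (hreach : ∀ y ∈ C, G.ReachIn S x y)
    (hclosed : ∀ y ∈ C, ∀ z ∈ S, G.Adj y z → z ∈ C) : IsComponentOf G S C := by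
  refine isComponentOf_iff.mpr ⟨x, hx, Set.ext fun y => ⟨hreach y, fun hy => ?_⟩⟩
  induction hy with
  | refl _ => exact hx
  | tail _ hadj hz ih => exact hclosed _ ih _ hz hadj

lemma inter_of_isPendantAt {A : Set α} {v a : α} (hC : IsComponentOf G S C)
    (hA : G.IsPendantAt A v) (ha : a ∈ C) (haA : a ∈ A) : IsComponentOf G (S ∩ A) (C ∩ A) :=
  of_reachIn ⟨ha, haA⟩
    (fun _ hy => ((hC.reachIn ha hy.1).inter_of_isPendantAt hA haA).1 hy.2)
    (fun _ hy _ hz hyz => ⟨hC.mem_of_adj hy.1 hz.1 hyz, hz.2⟩)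

end IsComponentOf

lemma exists_adj_of_isComponentOf_compl (hG : G.Connected) {T X : Set α} (hT : T.Nonempty)
    (hX : IsComponentOf G Tᶜ X) : ∃ p ∈ T, ∃ q ∈ X, G.Adj p q := by
  obtain ⟨u, hu⟩ := hT
  obtain ⟨x, hx⟩ := hX.nonempty
  obtain ⟨d, -, hd, hdX⟩ := (hG.preconnected u x).some.exists_boundary_dart Xᶜ
    (fun huX => hX.subset huX hu) (not_not.mpr hx)
  rw [Set.mem_compl_iff, not_not] at hdX
  by_cases hdT : d.fst ∈ T
  · exact ⟨_, hdT, _, hdX, d.adj⟩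
  · exact absurd (hX.mem_of_adj hdX hdT d.adj.symm) hd

lemma connected_induce_inter_of_isPendantAt {A T : Set α} {v : α} (hA : G.IsPendantAt A v)
    (hT : (G.induce T).Connected) (hne : (A ∩ T).Nonempty) : (G.induce (A ∩ T)).Connected := by
  rw [connected_induce_iff_reachIn] at hT ⊢
  refine ⟨hne, fun x hx y hy => ?_⟩
  rw [Set.inter_comm]
  exact ((hT.2 x hx.2 y hy.2).inter_of_isPendantAt hA hx.1).1 hy.1

lemma IsComponentOf.isPendantAt_union_singleton {D : Set α} {v : α}
    (hD : IsComponentOf G {v}ᶜ D) : G.IsPendantAt (D ∪ {v}) v := by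
  refine ⟨Or.inr rfl, fun x hx hxv y hxy => ?_⟩
  by_cases hyv : y = v
  · exact Or.inr hyv
  · exact Or.inl (hD.mem_of_adj (hx.resolve_right hxv) hyv hxy)

end Components

section Induce

variable {α : Type*} {G : SimpleGraph α} {A : Set α} {S' C' X' : Set A}

lemma reachIn_induce_iff {x y : A} :
    (G.induce A).ReachIn S' x y ↔ G.ReachIn (Subtype.val '' S') x y := by
  refine ⟨fun h => ?_, fun h => ?_⟩
  · induction h with
    | refl hx => exact .refl ⟨_, hx, rfl⟩
    | tail _ hadj hz ih => exact .tail ih hadj ⟨_, hz, rfl⟩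
  · suffices ∀ {a b : α}, G.ReachIn (Subtype.val '' S') a b →
        ∀ (ha : a ∈ A) (hb : b ∈ A), (G.induce A).ReachIn S' ⟨a, ha⟩ ⟨b, hb⟩ from
      this h x.2 y.2
    intro a b h
    induction h with
    | refl hx =>
      obtain ⟨x', hx', rfl⟩ := hx
      exact fun _ _ => .refl hx'
    | tail h hadj hz ih =>
      obtain ⟨y', -, rfl⟩ := h.mem_right
      obtain ⟨z', hz', rfl⟩ := hz
      exact fun ha _ => .tail (ih ha y'.2) hadj hz'

lemma isComponentOf_induce_iff :
    IsComponentOf (G.induce A) S' C' ↔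
      IsComponentOf G (Subtype.val '' S') (Subtype.val '' C') := by
  simp only [isComponentOf_iff]
  constructor
  · rintro ⟨x, hx, rfl⟩
    refine ⟨x, ⟨x, hx, rfl⟩, Set.ext fun y => ⟨?_, fun hy => ?_⟩⟩
    · rintro ⟨y, hy, rfl⟩
      exact reachIn_induce_iff.mp hy
    · obtain ⟨y, -, rfl⟩ := hy.mem_right
      exact ⟨y, reachIn_induce_iff.mpr hy, rfl⟩
  · rintro ⟨-, ⟨x, hx, rfl⟩, hC⟩
    refine ⟨x, hx, Set.ext fun y => ?_⟩
    rw [← Subtype.val_injective.mem_set_image, hC, Set.mem_ofPred_eq, Set.mem_ofPred_eq,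
      reachIn_induce_iff]

lemma IsComponentOf.image_preimage_val {R C : Set α} (hC : IsComponentOf G R C) (hR : R ⊆ A) :
    Subtype.val '' (Subtype.val ⁻¹' C : Set A) = C := by
  rw [Subtype.image_preimage_coe, Set.inter_eq_right.mpr (hC.subset.trans hR)]

lemma touches_induce_iff :
    Touches (G.induce A) C' X' ↔ Touches G (Subtype.val '' C') (Subtype.val '' X') := by
  simp [Touches]

lemma connected_induce_induce_iff :
    ((G.induce A).induce S').Connected ↔ (G.induce (Subtype.val '' S')).Connected := by
  simp only [connected_induce_iff_reachIn, Set.image_nonempty, Set.forall_mem_image,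
    reachIn_induce_iff]

end Induce

section Weight

variable {w W : V → ℝ} {A B B₁ B₂ : Set V}

lemma setWeight_eq_sum_indicator (w : V → ℝ) (B : Set V) :
    setWeight w B = ∑ u, B.indicator w u := by
  simp only [setWeight, Set.indicator_apply]

lemma setWeight_empty (w : V → ℝ) : setWeight w ∅ = 0 := by
  simp [setWeight]

lemma setWeight_singleton (w : V → ℝ) (u : V) : setWeight w {u} = w u := by
  simp [setWeight]

lemma setWeight_union (h : Disjoint B₁ B₂) :
    setWeight w (B₁ ∪ B₂) = setWeight w B₁ + setWeight w B₂ := by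
  simp only [setWeight_eq_sum_indicator, Set.indicator_union_of_disjoint h, Finset.sum_add_distrib]

lemma setWeight_inter_add_inter_compl (w : V → ℝ) (B A : Set V) :
    setWeight w (B ∩ A) + setWeight w (B ∩ Aᶜ) = setWeight w B := by
  rw [← setWeight_union (disjoint_compl_right.mono Set.inter_subset_right
    Set.inter_subset_right), Set.inter_union_compl]

lemma setWeight_congr (h : Set.EqOn w W B) : setWeight w B = setWeight W B := by
  simp only [setWeight_eq_sum_indicator, Set.indicator_congr h]

lemma setWeight_mono (hw : ∀ u, 0 ≤ w u) (h : B₁ ⊆ B₂) : setWeight w B₁ ≤ setWeight w B₂ := by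
  simp only [setWeight_eq_sum_indicator]
  exact Finset.sum_le_sum fun u _ => Set.indicator_le_indicator_of_subset h hw u

lemma setWeight_lt_setWeight (hw : ∀ u ∈ B₂, 0 < w u) (h : B₁ ⊂ B₂) :
    setWeight w B₁ < setWeight w B₂ := by
  obtain ⟨x, hx₂, hx₁⟩ := Set.exists_of_ssubset h
  simp only [setWeight_eq_sum_indicator]
  refine Finset.sum_lt_sum (fun u _ => ?_) ⟨x, Finset.mem_univ x, ?_⟩
  · by_cases hu₁ : u ∈ B₁
    · simp [hu₁, h.subset hu₁]
    · by_cases hu₂ : u ∈ B₂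
      · simpa [hu₁, hu₂] using (hw u hu₂).le
      · simp [hu₁, hu₂]
  · simpa [hx₁, hx₂] using hw x hx₂

lemma setWeight_pos (hw : ∀ u, 0 < w u) (hB : B.Nonempty) : 0 < setWeight w B :=
  setWeight_empty w ▸ setWeight_lt_setWeight (fun u _ => hw u) hB.empty_ssubset

lemma setWeight_update_sub (W : V → ℝ) (v : V) (ρ : ℝ) (B : Set V) :
    setWeight (Function.update W v (W v - ρ)) B = setWeight W B - if v ∈ B then ρ else 0 := by
  by_cases hv : v ∈ B
  · have hB : B = (B \ {v}) ∪ {v} :=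
      (Set.sdiff_union_of_subset (Set.singleton_subset_iff.mpr hv)).symm
    have hdisj : Disjoint (B \ {v}) {v} := Set.disjoint_sdiff_left
    have hW : Set.EqOn (Function.update W v (W v - ρ)) W (B \ {v}) :=
      fun u hu => Function.update_of_ne hu.2 _ _
    rw [if_pos hv, hB, setWeight_union hdisj, setWeight_union hdisj, setWeight_singleton,
      setWeight_singleton, setWeight_congr hW, Function.update_self]
    ring
  · rw [if_neg hv, sub_zero]
    exact setWeight_congr fun u hu => Function.update_of_ne (ne_of_mem_of_not_mem hu hv) _ _

lemma setWeight_image_val [Fintype A] {w' : A → ℝ} (hW : ∀ x : A, W x = w' x) (B' : Set A) :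
    setWeight W (Subtype.val '' B') = setWeight w' B' := by
  rw [setWeight_eq_sum_indicator, setWeight_eq_sum_indicator,
    ← Fintype.sum_subtype_add_sum_subtype (· ∈ A)]
  have hout : ∀ u : {u // u ∉ A}, (Subtype.val '' B').indicator W u = 0 :=
    fun u => Set.indicator_of_notMem (s := Subtype.val '' B')
      (fun ⟨x, _, hx⟩ => u.2 (hx ▸ x.2)) _
  simp only [hout, Finset.sum_const_zero, add_zero]
  congr 1 with x
  case e_s => simp
  by_cases hx : x ∈ B'
  · rw [Set.indicator_of_mem (Set.mem_image_of_mem _ hx), Set.indicator_of_mem hx, hW]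
  · rw [Set.indicator_of_notMem (by rwa [Subtype.val_injective.mem_set_image]),
      Set.indicator_of_notMem hx]

lemma exists_pos_forall_le_of_le_add {ι : Type*} [Finite ι] (f : ι → ℝ) :
    ∃ ε > 0, ∀ i j, f i ≤ f j + ε → f i ≤ f j := by
  have : ∀ᶠ ε in nhdsWithin (0 : ℝ) (Set.Ioi 0), ∀ ij : ι × ι,
      f ij.1 ≤ f ij.2 + ε → f ij.1 ≤ f ij.2 := by
    refine Filter.eventually_all.mpr fun ⟨i, j⟩ => ?_
    rcases le_or_gt (f i) (f j) with h | h
    · exact Filter.Eventually.of_forall fun _ _ => h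
    · filter_upwards [nhdsWithin_le_nhds (eventually_lt_nhds (sub_pos.mpr h))] with ε hε hle
      linarith
  obtain ⟨ε, hε, hpos⟩ := (this.and self_mem_nhdsWithin).exists
  exact ⟨ε, hpos, fun i j => hε (i, j)⟩

end Weight

section SafeSet

variable {G : SimpleGraph V} {W : V → ℝ} {A : Set V}

/-- A safe set of `G.induce A`, with its components and weights read in `G`. -/
def IsSafeSetIn (G : SimpleGraph V) (w : V → ℝ) (A S : Set V) : Prop :=
  S ⊆ A ∧ S.Nonempty ∧ S ≠ A ∧
    ∀ C X : Set V, IsComponentOf G S C → IsComponentOf G (A \ S) X → Touches G C X →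
      setWeight w X ≤ setWeight w C

lemma isSafeSet_induce_iff [Fintype A] {w' : A → ℝ} (hW : ∀ x : A, W x = w' x) {S' : Set A} :
    IsSafeSet (G.induce A) w' S' ↔ IsSafeSetIn G W A (Subtype.val '' S') := by
  have hcompl : Subtype.val '' S'ᶜ = A \ Subtype.val '' S' := by
    rw [Set.image_compl_eq_range_sdiff_image Subtype.val_injective, Subtype.range_coe]
  have hsub : Subtype.val '' S' ⊆ A := Subtype.coe_image_subset A S'
  have hne : S' ≠ Set.univ ↔ Subtype.val '' S' ≠ A := by
    have := (Subtype.val_injective (p := (· ∈ A))).image_injective.ne_iff (x := S') (y := .univ)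
    rwa [Subtype.coe_image_univ, Iff.comm] at this
  have hcomp : (∀ C' X' : Set A, IsComponentOf (G.induce A) S' C' →
      IsComponentOf (G.induce A) S'ᶜ X' → Touches (G.induce A) C' X' →
        setWeight w' X' ≤ setWeight w' C') ↔
      ∀ C X : Set V, IsComponentOf G (Subtype.val '' S') C →
        IsComponentOf G (A \ Subtype.val '' S') X → Touches G C X →
          setWeight W X ≤ setWeight W C := by
    simp only [isComponentOf_induce_iff, touches_induce_iff, ← setWeight_image_val hW, hcompl]
    refine ⟨fun hsafe C X hC hX hCX => ?_, fun hsafe C' X' => hsafe _ _⟩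
    rw [← hC.image_preimage_val hsub, ← hX.image_preimage_val Set.sdiff_subset] at *
    exact hsafe _ _ hC hX hCX
  unfold IsSafeSet IsSafeSetIn
  rw [Set.image_nonempty, hne, hcomp]
  exact ⟨fun h => ⟨hsub, h⟩, fun h => h.2⟩

lemma isConnSafeSet_induce_iff [Fintype A] {w' : A → ℝ} (hW : ∀ x : A, W x = w' x) {S' : Set A} :
    IsConnSafeSet (G.induce A) w' S' ↔
      IsSafeSetIn G W A (Subtype.val '' S') ∧ (G.induce (Subtype.val '' S')).Connected :=
  and_congr (isSafeSet_induce_iff hW) connected_induce_induce_iff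

end SafeSet

section Lift

variable {G : SimpleGraph V} {w W : V → ℝ} {A S : Set V} {v : V} {ρ : ℝ}

lemma IsSafeSetIn.isSafeSet_union_compl (hA : G.IsPendantAt A v) (hS : IsSafeSetIn G W A S)
    (hvS : v ∈ S) (hw : ∀ u, 0 ≤ w u) (hwW : ∀ B ⊆ A, setWeight w B = setWeight W B) :
    IsSafeSet G w (S ∪ Aᶜ) := by
  obtain ⟨hSA, hne, hSne, hsafe⟩ := hS
  obtain ⟨x, hxA, hxS⟩ : ∃ x ∈ A, x ∉ S := Set.not_subset.mp fun h => hSne (hSA.antisymm h)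
  refine ⟨hne.mono Set.subset_union_left, fun h => ?_, fun C X hC hX ⟨a, haC, b, hbX, hab⟩ => ?_⟩
  · exact (h ▸ Set.mem_univ x : x ∈ S ∪ Aᶜ).elim hxS (· hxA)
  · rw [Set.compl_union, compl_compl, Set.inter_comm, ← Set.sdiff_eq] at hX
    obtain ⟨hbA, hbS⟩ := hX.subset hbX
    have haA : a ∈ A := hA.2 b hbA (fun hbv => hbS (hbv ▸ hvS)) a hab.symm
    have hCA := hC.inter_of_isPendantAt hA haC haA
    rw [Set.union_inter_distrib_right, Set.compl_inter_self, Set.union_empty,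
      Set.inter_eq_left.mpr hSA] at hCA
    calc setWeight w X = setWeight W X := hwW X (hX.subset.trans Set.sdiff_subset)
      _ ≤ setWeight W (C ∩ A) := hsafe _ X hCA hX ⟨a, ⟨haC, haA⟩, b, hbX, hab⟩
      _ = setWeight w (C ∩ A) := (hwW _ Set.inter_subset_right).symm
      _ ≤ setWeight w C := setWeight_mono hw Set.inter_subset_left

/-- Lowering the weight of `v` by `ρ ≥ w(Aᶜ)` pays for the part of `G - S` outside `A`. -/
lemma IsSafeSetIn.isSafeSet (hG : G.Connected) (hA : G.IsPendantAt A v)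
    (hS : IsSafeSetIn G W A S) (hvS : v ∉ S) (hw : ∀ u, 0 ≤ w u)
    (hwW : ∀ B ⊆ A, setWeight w B = setWeight W B - if v ∈ B then ρ else 0)
    (hout : setWeight w Aᶜ ≤ ρ) : IsSafeSet G w S := by
  obtain ⟨hSA, hne, -, hsafe⟩ := hS
  refine ⟨hne, fun h => hvS (h ▸ Set.mem_univ v), fun C X hC hX ⟨a, haC, b, hbX, hab⟩ => ?_⟩
  have haA := hSA (hC.subset haC)
  have hbA : b ∈ A := hA.2 a haA (fun hav => hvS (hav ▸ hC.subset haC)) b hab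
  have hXA := hX.inter_of_isPendantAt hA hbX hbA
  rw [Set.inter_comm, ← Set.sdiff_eq] at hXA
  have hX_le : setWeight w X ≤ setWeight W (X ∩ A) := by
    by_cases hvX : v ∈ X
    · rw [← setWeight_inter_add_inter_compl w X A, hwW _ Set.inter_subset_right,
        if_pos ⟨hvX, hA.1⟩]
      linarith [setWeight_mono hw (Set.inter_subset_right : X ∩ Aᶜ ⊆ Aᶜ)]
    · have hXA : X ⊆ A := fun r hrX => by_contra fun hrA => hvX <| hX.mem_of_reachIn hrX <|
        (hA.compl_union.reachIn hG (Or.inl hrA)).mono <|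
          Set.union_subset (Set.compl_subset_compl.mpr hSA) (Set.singleton_subset_iff.mpr hvS)
      rw [Set.inter_eq_left.mpr hXA, hwW X hXA, if_neg hvX, sub_zero]
  calc setWeight w X ≤ setWeight W (X ∩ A) := hX_le
    _ ≤ setWeight W C := hsafe C _ hC hXA ⟨a, haC, b, ⟨hbX, hbA⟩, hab⟩
    _ = setWeight w C := by
      rw [hwW C (hC.subset.trans hSA), if_neg fun h => hvS (hC.subset h), sub_zero]

lemma exists_pos_eqOn_setWeight_compl_le (hW : ∀ x ∈ A, 0 < W x) (hρ : 0 < ρ) :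
    ∃ w : V → ℝ, (∀ u, 0 < w u) ∧ Set.EqOn w W A ∧ setWeight w Aᶜ ≤ ρ := by
  set δ := ρ / (Fintype.card V + 1)
  have hδ : 0 < δ := by positivity
  refine ⟨A.piecewise W fun _ => δ, fun u => ?_, A.piecewise_eqOn _ _, ?_⟩
  · by_cases hu : u ∈ A
    · simpa [hu] using hW u hu
    · simpa [hu] using hδ
  · calc setWeight (A.piecewise W fun _ => δ) Aᶜ = setWeight (fun _ => δ) Aᶜ :=
          setWeight_congr (A.piecewise_eqOn_compl _ _)
      _ ≤ setWeight (fun _ => δ) Set.univ := setWeight_mono (fun _ => hδ.le) (Set.subset_univ _)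
      _ = Fintype.card V * δ := by simp [setWeight]
      _ ≤ ρ := by
        rw [mul_div_assoc', div_le_iff₀ (by positivity)]
        linarith

lemma IsSafeSetIn.exists_weight_isSafeSet (hG : G.Connected) (hA : G.IsPendantAt A v)
    (hS : IsSafeSetIn G W A S) (hW : ∀ x ∈ A, 0 < W x) (hρ : 0 < ρ) (hρv : ρ < W v) :
    ∃ w : V → ℝ, (∀ u, 0 < w u) ∧
      (∀ B ⊆ A, setWeight w B ≤ setWeight W B ∧ setWeight W B ≤ setWeight w B + ρ) ∧
      setWeight w Aᶜ ≤ ρ ∧ ∃ S', IsSafeSet G w S' ∧ setWeight w S' ≤ setWeight W S + ρ := by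
  by_cases hvS : v ∈ S
  · obtain ⟨w, hw, hwW, hout⟩ := exists_pos_eqOn_setWeight_compl_le hW hρ
    have hwA : ∀ B ⊆ A, setWeight w B = setWeight W B :=
      fun B hB => setWeight_congr (hwW.mono hB)
    refine ⟨w, hw, fun B hB => ⟨(hwA B hB).le, by linarith [hwA B hB]⟩, hout, S ∪ Aᶜ,
      hS.isSafeSet_union_compl hA hvS (fun u => (hw u).le) hwA, ?_⟩
    rw [setWeight_union (disjoint_compl_right.mono_left hS.1), hwA S hS.1]
    linarith
  · have hW' : ∀ x ∈ A, 0 < Function.update W v (W v - ρ) x := fun x hx => by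
      by_cases hxv : x = v
      · rw [hxv, Function.update_self]
        linarith
      · rw [Function.update_of_ne hxv]
        exact hW x hx
    obtain ⟨w, hw, hwW, hout⟩ := exists_pos_eqOn_setWeight_compl_le hW' hρ
    have hwA : ∀ B ⊆ A, setWeight w B = setWeight W B - if v ∈ B then ρ else 0 :=
      fun B hB => (setWeight_congr (hwW.mono hB)).trans (setWeight_update_sub W v ρ B)
    refine ⟨w, hw, fun B hB => ?_, hout, S,
      hS.isSafeSet hG hA hvS (fun u => (hw u).le) hwA hout, ?_⟩
    · rw [hwA B hB]
      split_ifs <;> constructor <;> linarith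
    · rw [hwA S hS.1, if_neg hvS]
      linarith

end Lift

section Restrict

variable {G : SimpleGraph V} {w W : V → ℝ} {A T S₀ : Set V} {v : V} {ρ : ℝ}

lemma IsSafeSet.inter_nonempty_of_isPendantAt (hG : G.Connected) (hA : G.IsPendantAt A v)
    (hT : IsSafeSet G w T) (hw : ∀ u, 0 ≤ w u) (hlt : setWeight w T < setWeight w A) :
    (A ∩ T).Nonempty := by
  by_contra hAT
  have hATc : A ⊆ Tᶜ := fun a ha haT => hAT ⟨a, ha, haT⟩
  have hX : IsComponentOf G Tᶜ {y | G.ReachIn Tᶜ v y} := isComponentOf_setOf_reachIn (hATc hA.1)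
  have hAX : A ⊆ {y | G.ReachIn Tᶜ v y} := fun a ha => ((hA.reachIn hG ha).mono hATc).symm
  obtain ⟨p, hp, q, hq, hpq⟩ := exists_adj_of_isComponentOf_compl hG hT.1 hX
  have hC : IsComponentOf G T {y | G.ReachIn T p y} := isComponentOf_setOf_reachIn hp
  have hXC := hT.2.2 _ _ hC hX ⟨p, .refl hp, q, hq, hpq⟩
  linarith [setWeight_mono hw hAX, setWeight_mono hw hC.subset]

lemma IsSafeSet.isSafeSetIn_inter (hA : G.IsPendantAt A v) (hT : IsSafeSet G w T)
    (hw : ∀ u, 0 ≤ w u) (hle : ∀ B ⊆ A, setWeight w B ≤ setWeight W B)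
    (hge : ∀ B ⊆ A, setWeight W B ≤ setWeight w B + ρ) (hout : setWeight w Aᶜ ≤ ρ)
    (hgap : ∀ B₁ B₂, setWeight W B₁ ≤ setWeight W B₂ + 2 * ρ → setWeight W B₁ ≤ setWeight W B₂)
    (hne : (A ∩ T).Nonempty) (hAT : A ∩ T ≠ A) : IsSafeSetIn G W A (A ∩ T) := by
  refine ⟨Set.inter_subset_left, hne, hAT, fun C X hC hX ⟨a, haC, b, hbX, hab⟩ => hgap _ _ ?_⟩
  rw [Set.sdiff_self_inter] at hX
  obtain ⟨haA, haT⟩ := hC.subset haC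
  obtain ⟨hbA, hbT⟩ := hX.subset hbX
  have hCT : IsComponentOf G T {y | G.ReachIn T a y} := isComponentOf_setOf_reachIn haT
  have hXT : IsComponentOf G Tᶜ {y | G.ReachIn Tᶜ b y} := isComponentOf_setOf_reachIn hbT
  have hXXT : X ⊆ {y | G.ReachIn Tᶜ b y} := fun y hy => (hX.reachIn hbX hy).mono fun z hz => hz.2
  have hCTC : {y | G.ReachIn T a y} ∩ A ⊆ C := by
    have hCTA := hCT.inter_of_isPendantAt hA (.refl haT) haA
    rw [Set.inter_comm T A] at hCTA
    exact (hCTA.eq_of_mem hC ⟨.refl haT, haA⟩ haC).le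
  have hsafe := hT.2.2 _ _ hCT hXT ⟨a, .refl haT, b, .refl hbT, hab⟩
  linarith [hge X (hX.subset.trans Set.sdiff_subset), setWeight_mono hw hXXT,
    setWeight_inter_add_inter_compl w {y | G.ReachIn T a y} A, setWeight_mono hw hCTC,
    setWeight_mono hw (Set.inter_subset_right : {y | G.ReachIn T a y} ∩ Aᶜ ⊆ Aᶜ),
    hle C (hC.subset.trans Set.inter_subset_left)]

lemma IsConnSafeSet.inter_of_isPendantAt (hG : G.Connected) (hA : G.IsPendantAt A v)
    (hT : IsConnSafeSet G w T) (hw : ∀ u, 0 ≤ w u) (hW : ∀ x ∈ A, 0 < W x)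
    (hle : ∀ B ⊆ A, setWeight w B ≤ setWeight W B)
    (hge : ∀ B ⊆ A, setWeight W B ≤ setWeight w B + ρ) (hout : setWeight w Aᶜ ≤ ρ)
    (hgap : ∀ B₁ B₂, setWeight W B₁ ≤ setWeight W B₂ + 2 * ρ → setWeight W B₁ ≤ setWeight W B₂)
    (hS₀ : S₀ ⊂ A) (hTw : setWeight w T ≤ setWeight W S₀ + ρ) :
    (IsSafeSetIn G W A (A ∩ T) ∧ (G.induce (A ∩ T)).Connected) ∧
      setWeight W (A ∩ T) ≤ setWeight W S₀ := by
  have hS₀A := setWeight_lt_setWeight hW hS₀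
  have hlt : setWeight w T < setWeight w A := by
    by_contra! h
    linarith [hgap A S₀ (by linarith [hge A subset_rfl])]
  have hne := hT.1.inter_nonempty_of_isPendantAt hG hA hw hlt
  have hAT : A ∩ T ≠ A := fun h =>
    (h ▸ setWeight_mono hw Set.inter_subset_right : setWeight w A ≤ setWeight w T).not_gt hlt
  refine ⟨⟨hT.1.isSafeSetIn_inter hA hw hle hge hout hgap hne hAT,
    connected_induce_inter_of_isPendantAt hA hT.2 hne⟩, hgap _ _ ?_⟩
  linarith [hge (A ∩ T) Set.inter_subset_left,
    setWeight_mono hw (Set.inter_subset_right : A ∩ T ⊆ T)]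

end Restrict

section SafeNumber

variable {G : SimpleGraph V} {w : V → ℝ} {S : Set V}

lemma exists_setWeight_eq_sInf {P : Set (Set V)} (hP : P.Nonempty) :
    ∃ S ∈ P, setWeight w S = sInf (setWeight w '' P) :=
  (hP.image _).csInf_mem (Set.toFinite _)

lemma sInf_setWeight_le {P : Set (Set V)} (hS : S ∈ P) :
    sInf (setWeight w '' P) ≤ setWeight w S :=
  csInf_le (Set.toFinite _).bddBelow (Set.mem_image_of_mem _ hS)

lemma exists_isSafeSet_setWeight_eq (h : ∃ S, IsSafeSet G w S) :
    ∃ S, IsSafeSet G w S ∧ setWeight w S = safeNumber G w :=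
  exists_setWeight_eq_sInf (P := {S | IsSafeSet G w S}) h

lemma exists_isConnSafeSet_setWeight_eq (h : ∃ S, IsConnSafeSet G w S) :
    ∃ S, IsConnSafeSet G w S ∧ setWeight w S = connSafeNumber G w :=
  exists_setWeight_eq_sInf (P := {S | IsConnSafeSet G w S}) h

lemma safeNumber_le (hS : IsSafeSet G w S) : safeNumber G w ≤ setWeight w S :=
  sInf_setWeight_le (P := {S | IsSafeSet G w S}) hS

lemma connSafeNumber_le (hS : IsConnSafeSet G w S) : connSafeNumber G w ≤ setWeight w S :=
  sInf_setWeight_le (P := {S | IsConnSafeSet G w S}) hS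

lemma safeNumber_le_connSafeNumber (h : ∃ S, IsConnSafeSet G w S) :
    safeNumber G w ≤ connSafeNumber G w := by
  obtain ⟨S, hS, hSw⟩ := exists_isConnSafeSet_setWeight_eq h
  exact hSw ▸ safeNumber_le hS.1

lemma safeNumber_eq_connSafeNumber_of_not_exists (h : ¬ ∃ S, IsSafeSet G w S) :
    safeNumber G w = connSafeNumber G w := by
  have h₁ : {S | IsSafeSet G w S} = ∅ := Set.eq_empty_of_forall_notMem fun S hS => h ⟨S, hS⟩
  have h₂ : {S | IsConnSafeSet G w S} = ∅ :=
    Set.eq_empty_of_forall_notMem fun S hS => h ⟨S, hS.1⟩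
  rw [safeNumber, connSafeNumber, h₁, h₂]

lemma InGcs.exists_isConnSafeSet_le (hG : InGcs G) (hw : ∀ u, 0 < w u) (hS : IsSafeSet G w S) :
    ∃ T, IsConnSafeSet G w T ∧ setWeight w T ≤ setWeight w S := by
  have hconn : ∃ T, IsConnSafeSet G w T := by
    by_contra h
    obtain ⟨S₁, hS₁, hS₁w⟩ := exists_isSafeSet_setWeight_eq ⟨S, hS⟩
    have hpos := setWeight_pos hw hS₁.1
    have hempty : {T | IsConnSafeSet G w T} = ∅ :=
      Set.eq_empty_of_forall_notMem fun T hT => h ⟨T, hT⟩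
    rw [hS₁w, hG w hw, connSafeNumber, hempty, Set.image_empty, Real.sInf_empty] at hpos
    exact hpos.false
  obtain ⟨T, hT, hTw⟩ := exists_isConnSafeSet_setWeight_eq hconn
  refine ⟨T, hT, ?_⟩
  calc setWeight w T = connSafeNumber G w := hTw
    _ = safeNumber G w := (hG w hw).symm
    _ ≤ setWeight w S := safeNumber_le hS

end SafeNumber

theorem InGcs.induce_of_isPendantAt {G : SimpleGraph V} {A : Set V} [Fintype A] {v : V}
    (hG : G.Connected) (hGcs : InGcs G) (hA : G.IsPendantAt A v) : InGcs (G.induce A) := by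
  intro w' hw'
  set W : V → ℝ := fun x => if hx : x ∈ A then w' ⟨x, hx⟩ else 0
  have hW : ∀ x : A, W x = w' x := fun x => dif_pos x.2
  have hWpos : ∀ x ∈ A, 0 < W x := fun x hx => (hW ⟨x, hx⟩).symm ▸ hw' _
  by_cases hsafe : ∃ S', IsSafeSet (G.induce A) w' S'
  swap
  · exact safeNumber_eq_connSafeNumber_of_not_exists hsafe
  obtain ⟨S₀', hS₀', hS₀'w⟩ := exists_isSafeSet_setWeight_eq hsafe
  have hS₀ := (isSafeSet_induce_iff hW).mp hS₀'
  obtain ⟨ε, hε, hgap⟩ := exists_pos_forall_le_of_le_add (setWeight W)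
  have hεv : ε < W v := by
    by_contra! h
    have := hgap {v} ∅ (by rwa [setWeight_singleton, setWeight_empty, zero_add])
    rw [setWeight_singleton, setWeight_empty] at this
    linarith [hWpos v hA.1]
  obtain ⟨w, hw, hwW, hout, S, hS, hSw⟩ :=
    hS₀.exists_weight_isSafeSet hG hA hWpos (half_pos hε) (by linarith)
  obtain ⟨T, hT, hTw⟩ := hGcs.exists_isConnSafeSet_le hw hS
  obtain ⟨hTA, hTAw⟩ := hT.inter_of_isPendantAt hG hA (fun u => (hw u).le) hWpos
    (fun B hB => (hwW B hB).1) (fun B hB => (hwW B hB).2) hout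
    (fun B₁ B₂ h => hgap B₁ B₂ (by linarith)) (hS₀.1.ssubset_of_ne hS₀.2.2.1) (by linarith)
  rw [← Subtype.image_preimage_coe A T, ← isConnSafeSet_induce_iff hW] at hTA
  refine le_antisymm (safeNumber_le_connSafeNumber ⟨_, hTA⟩) ?_
  calc connSafeNumber (G.induce A) w' ≤ setWeight w' (Subtype.val ⁻¹' T) := connSafeNumber_le hTA
    _ = setWeight W (A ∩ T) := by rw [← setWeight_image_val hW, Subtype.image_preimage_coe]
    _ ≤ setWeight W (Subtype.val '' S₀') := hTAw
    _ = safeNumber (G.induce A) w' := by rw [setWeight_image_val hW, hS₀'w]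

theorem stmt_5_general (G : SimpleGraph V) (hG : G.Connected) (hGcs : InGcs G) (v : V)
    (D : Set V)
    (hD : IsComponentOf G ({v}ᶜ : Set V) D) :
    InGcs (G.induce (D ∪ {v})) :=
  hGcs.induce_of_isPendantAt hG hD.isPendantAt_union_singleton

theorem stmt_5 (G : SimpleGraph V) (hG : G.Connected) (hGcs : InGcs G) (v : V)
    (hcut : ¬ (G.induce ({v}ᶜ : Set V)).Connected) (D : Set V)
    (hD : IsComponentOf G ({v}ᶜ : Set V) D) :
    InGcs (G.induce (D ∪ {v})) :=
  stmt_5_general G hG hGcs v D hD
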